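/- arXiv:1501.03412 — 4 statements merged into one kernel-verified Lean document; each statement's English description precedes it below -/
import Mathlib

section
/- The integral over the real line ∫_{−∞}^{∞} [ −f(x)·ln f(x) − (1−f(x))·ln(1−f(x)) ] dx, with f(x) = (1 + e^x)⁻¹, converges and equals π²/3. -/
open MeasureTheory Set Real

/-!
Substituting `u = f x`, i.e. `x = log ((1 - u) / u)` with `dx = -du / (u (1 - u))`, turns the
integral into `∫₀¹ h₁(u) / (u (1 - u)) du = ∫₀¹ (-log (1 - u) / u - log u / (1 - u)) du`.
The reflection `u ↦ 1 - u` exchanges the two terms, and expanding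
`-log (1 - u) / u = ∑ uⁿ / (n + 1)` and integrating termwise gives `∑ 1 / (n + 1)² = π² / 6`
for each of them.
-/

section NonnegSeries

variable {α ι : Type*} [MeasurableSpace α] {μ : Measure α} [Countable ι]
  {F : ι → α → ℝ} {f : α → ℝ}

theorem integrable_of_hasSum_of_nonneg (hF_int : ∀ i, Integrable (F i) μ)
    (hF_nonneg : ∀ i, 0 ≤ᵐ[μ] F i) (hf : ∀ᵐ a ∂μ, HasSum (fun i ↦ F i a) (f a))
    (hsum : Summable fun i ↦ ∫ a, F i a ∂μ) : Integrable f μ := by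
  refine ⟨aestronglyMeasurable_of_tendsto_ae _
    (fun s ↦ Finset.aestronglyMeasurable_fun_sum s fun i _ ↦ (hF_int i).1) hf, ?_⟩
  have h_lintegral : ∫⁻ a, ‖f a‖ₑ ∂μ = ∑' i, ∫⁻ a, ‖F i a‖ₑ ∂μ := by
    rw [← lintegral_tsum fun i ↦ (hF_int i).1.enorm]
    refine lintegral_congr_ae ?_
    filter_upwards [hf, ae_all_iff.2 hF_nonneg] with a ha h0
    rw [Real.enorm_eq_ofReal (ha.nonneg h0), ← ha.tsum_eq,
      ENNReal.ofReal_tsum_of_nonneg h0 ha.summable]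
    exact tsum_congr fun i ↦ (Real.enorm_eq_ofReal (h0 i)).symm
  have h_term (i : ι) : ∫⁻ a, ‖F i a‖ₑ ∂μ = ENNReal.ofReal (∫ a, F i a ∂μ) := by
    rw [ofReal_integral_eq_lintegral_ofReal (hF_int i) (hF_nonneg i)]
    exact lintegral_congr_ae ((hF_nonneg i).mono fun a ha ↦ Real.enorm_eq_ofReal ha)
  rw [HasFiniteIntegral, h_lintegral, tsum_congr h_term,
    ← ENNReal.ofReal_tsum_of_nonneg (fun i ↦ integral_nonneg_of_ae (hF_nonneg i)) hsum]
  exact ENNReal.ofReal_lt_top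

theorem integral_eq_of_hasSum_of_nonneg {I : ℝ} (hF_int : ∀ i, Integrable (F i) μ)
    (hF_nonneg : ∀ i, 0 ≤ᵐ[μ] F i) (hf : ∀ᵐ a ∂μ, HasSum (fun i ↦ F i a) (f a))
    (hI : HasSum (fun i ↦ ∫ a, F i a ∂μ) I) : ∫ a, f a ∂μ = I := by
  have h_norm (i : ι) : ∫ a, ‖F i a‖ ∂μ = ∫ a, F i a ∂μ :=
    integral_congr_ae ((hF_nonneg i).mono fun a ha ↦ Real.norm_of_nonneg ha)
  have h := hasSum_integral_of_summable_integral_norm hF_int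
    (by simpa only [h_norm] using hI.summable)
  rw [integral_congr_ae (hf.mono fun a ha ↦ ha.tsum_eq)] at h
  exact h.unique hI

end NonnegSeries

theorem hasSum_pow_div_succ_of_mem_Ioo {u : ℝ} (hu : u ∈ Ioo (0 : ℝ) 1) :
    HasSum (fun n : ℕ ↦ u ^ n / (n + 1)) (-log (1 - u) / u) := by
  have h := (hasSum_pow_div_log_of_abs_lt_one (abs_lt.2 ⟨by linarith [hu.1], hu.2⟩)).div_const u
  refine h.congr_fun fun n ↦ ?_
  rw [pow_succ]
  field_simp [hu.1.ne']

theorem integral_Ioo_pow_div_succ (n : ℕ) :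
    ∫ u in Ioo (0 : ℝ) 1, u ^ n / (n + 1) = 1 / ((n : ℝ) + 1) ^ 2 := by
  rw [← integral_Ioc_eq_integral_Ioo, ← intervalIntegral.integral_of_le zero_le_one,
    intervalIntegral.integral_div, integral_pow]
  field_simp
  ring

theorem hasSum_one_div_succ_sq : HasSum (fun n : ℕ ↦ 1 / ((n : ℝ) + 1) ^ 2) (π ^ 2 / 6) := by
  have h := (hasSum_nat_add_iff (f := fun n : ℕ ↦ 1 / (n : ℝ) ^ 2) (g := π ^ 2 / 6) 1).2
    (by simpa using hasSum_zeta_two)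
  simpa using h

theorem integrableOn_pow_div_succ (n : ℕ) :
    IntegrableOn (fun u : ℝ ↦ u ^ n / (n + 1)) (Ioo 0 1) :=
  ((continuous_pow n).div_const _).integrableOn_Icc.mono_set Ioo_subset_Icc_self

theorem integrableOn_neg_log_one_sub_div_self :
    IntegrableOn (fun u ↦ -log (1 - u) / u) (Ioo 0 1) :=
  integrable_of_hasSum_of_nonneg integrableOn_pow_div_succ
    (fun n ↦ ae_restrict_of_forall_mem measurableSet_Ioo fun u hu ↦ by
      have := hu.1; positivity)
    (ae_restrict_of_forall_mem measurableSet_Ioo fun u hu ↦ hasSum_pow_div_succ_of_mem_Ioo hu)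
    (by simpa only [integral_Ioo_pow_div_succ] using hasSum_one_div_succ_sq.summable)

theorem integral_neg_log_one_sub_div_self :
    ∫ u in Ioo (0 : ℝ) 1, -log (1 - u) / u = π ^ 2 / 6 :=
  integral_eq_of_hasSum_of_nonneg integrableOn_pow_div_succ
    (fun n ↦ ae_restrict_of_forall_mem measurableSet_Ioo fun u hu ↦ by
      have := hu.1; positivity)
    (ae_restrict_of_forall_mem measurableSet_Ioo fun u hu ↦ hasSum_pow_div_succ_of_mem_Ioo hu)
    (by simpa only [integral_Ioo_pow_div_succ] using hasSum_one_div_succ_sq)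

theorem integrableOn_neg_log_div_one_sub :
    IntegrableOn (fun u ↦ -log u / (1 - u)) (Ioo 0 1) := by
  have h := ((intervalIntegrable_iff_integrableOn_Ioo_of_le zero_le_one).2
    integrableOn_neg_log_one_sub_div_self).comp_sub_left 1
  simp only [sub_zero, sub_self, sub_sub_cancel] at h
  exact (intervalIntegrable_iff_integrableOn_Ioo_of_le zero_le_one).1 h.symm

theorem integral_neg_log_div_one_sub :
    ∫ u in Ioo (0 : ℝ) 1, -log u / (1 - u) = π ^ 2 / 6 := by
  have h := intervalIntegral.integral_comp_sub_left (a := 0) (b := 1)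
    (fun u ↦ -log (1 - u) / u) 1
  simp only [sub_sub_cancel, sub_zero, sub_self] at h
  rw [← integral_neg_log_one_sub_div_self, ← integral_Ioc_eq_integral_Ioo,
    ← integral_Ioc_eq_integral_Ioo, ← intervalIntegral.integral_of_le zero_le_one,
    ← intervalIntegral.integral_of_le zero_le_one, h]

noncomputable def fermi (x : ℝ) : ℝ := (1 + exp x)⁻¹

noncomputable def fermiInv (u : ℝ) : ℝ := log (1 - u) - log u

theorem fermi_mem_Ioo (x : ℝ) : fermi x ∈ Ioo (0 : ℝ) 1 :=
  ⟨inv_pos.2 (by positivity), inv_lt_one_of_one_lt₀ (lt_add_of_pos_right 1 (exp_pos x))⟩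

theorem fermiInv_fermi (x : ℝ) : fermiInv (fermi x) = x := by
  have h1 : 1 - fermi x = exp x * fermi x := by
    simp only [fermi]
    field_simp
    ring
  rw [fermiInv, h1, log_mul (exp_ne_zero x) (fermi_mem_Ioo x).1.ne', log_exp,
    add_sub_cancel_right]

theorem fermi_fermiInv {u : ℝ} (hu : u ∈ Ioo (0 : ℝ) 1) : fermi (fermiInv u) = u := by
  have h1 : 0 < 1 - u := sub_pos.2 hu.2
  rw [fermi, fermiInv, exp_sub, exp_log h1, exp_log hu.1]
  field_simp [hu.1.ne']
  ring

theorem hasDerivAt_fermiInv {u : ℝ} (hu : u ∈ Ioo (0 : ℝ) 1) :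
    HasDerivAt fermiInv (-(u⁻¹ + (1 - u)⁻¹)) u := by
  have h := (((hasDerivAt_id u).const_sub 1).log (sub_pos.2 hu.2).ne').sub
    (hasDerivAt_log hu.1.ne')
  exact h.congr_deriv (by rw [id]; ring)

theorem image_fermiInv_Ioo : fermiInv '' Ioo 0 1 = univ :=
  eq_univ_of_forall fun x ↦ ⟨fermi x, fermi_mem_Ioo x, fermiInv_fermi x⟩

theorem injOn_fermiInv : InjOn fermiInv (Ioo 0 1) :=
  fun _ hu _ hv h ↦ by rw [← fermi_fermiInv hu, ← fermi_fermiInv hv, h]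

section ChangeOfVariables

variable {E : Type*} [NormedAddCommGroup E] [NormedSpace ℝ E]

theorem eqOn_abs_deriv_fermiInv_smul (g : ℝ → E) :
    EqOn (fun u ↦ |-(u⁻¹ + (1 - u)⁻¹)| • g (fermiInv u))
      (fun u ↦ (u⁻¹ + (1 - u)⁻¹) • g (fermiInv u)) (Ioo 0 1) := fun u hu ↦ by
  have := sub_pos.2 hu.2
  have := hu.1
  simp only [abs_neg, abs_of_pos (by positivity : 0 < u⁻¹ + (1 - u)⁻¹)]

theorem integrable_iff_integrableOn_smul_comp_fermiInv (g : ℝ → E) :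
    Integrable g ↔ IntegrableOn (fun u ↦ (u⁻¹ + (1 - u)⁻¹) • g (fermiInv u)) (Ioo 0 1) := by
  rw [← integrableOn_univ, ← image_fermiInv_Ioo,
    integrableOn_image_iff_integrableOn_abs_deriv_smul measurableSet_Ioo
      (fun u hu ↦ (hasDerivAt_fermiInv hu).hasDerivWithinAt) injOn_fermiInv]
  exact integrableOn_congr_fun (eqOn_abs_deriv_fermiInv_smul g) measurableSet_Ioo

theorem integral_eq_integral_smul_comp_fermiInv (g : ℝ → E) :
    ∫ x, g x = ∫ u in Ioo 0 1, (u⁻¹ + (1 - u)⁻¹) • g (fermiInv u) := by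
  rw [← setIntegral_univ, ← image_fermiInv_Ioo,
    integral_image_eq_integral_abs_deriv_smul measurableSet_Ioo
      (fun u hu ↦ (hasDerivAt_fermiInv hu).hasDerivWithinAt) injOn_fermiInv]
  exact setIntegral_congr_fun measurableSet_Ioo (eqOn_abs_deriv_fermiInv_smul g)

end ChangeOfVariables

theorem inv_add_inv_one_sub_mul_binEntropy {u : ℝ} (hu : u ∈ Ioo (0 : ℝ) 1) :
    (u⁻¹ + (1 - u)⁻¹) * binEntropy u = -log (1 - u) / u + -log u / (1 - u) := by
  have := hu.1.ne'
  have := (sub_pos.2 hu.2).ne'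
  rw [binEntropy, log_inv, log_inv]
  field_simp
  ring

/-- The integral over `ℝ` of the binary entropy of the Fermi function,
`∫ (-f(x) ln f(x) - (1-f(x)) ln(1-f(x))) dx` with `f(x) = (1+eˣ)⁻¹`,
converges and equals `π²/3`. -/
theorem integral_entropy_fermi_eq_pi_sq_div_three :
    Integrable (fun x : ℝ =>
        -((1 + Real.exp x)⁻¹ * Real.log ((1 + Real.exp x)⁻¹))
          - (1 - (1 + Real.exp x)⁻¹) * Real.log (1 - (1 + Real.exp x)⁻¹)) ∧
    ∫ x : ℝ,
        (-((1 + Real.exp x)⁻¹ * Real.log ((1 + Real.exp x)⁻¹))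
          - (1 - (1 + Real.exp x)⁻¹) * Real.log (1 - (1 + Real.exp x)⁻¹))
      = Real.pi ^ 2 / 3 := by
  have h_integrand : (fun x : ℝ ↦ -((1 + exp x)⁻¹ * log ((1 + exp x)⁻¹))
      - (1 - (1 + exp x)⁻¹) * log (1 - (1 + exp x)⁻¹)) = fun x ↦ binEntropy (fermi x) := by
    ext x
    simp only [binEntropy, fermi, log_inv]
    ring
  have h_subst : EqOn (fun u ↦ (u⁻¹ + (1 - u)⁻¹) • binEntropy (fermi (fermiInv u)))
      (fun u ↦ -log (1 - u) / u + -log u / (1 - u)) (Ioo 0 1) := fun u hu ↦ by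
    simp only [fermi_fermiInv hu, smul_eq_mul, inv_add_inv_one_sub_mul_binEntropy hu]
  rw [h_integrand, integrable_iff_integrableOn_smul_comp_fermiInv,
    integral_eq_integral_smul_comp_fermiInv, setIntegral_congr_fun measurableSet_Ioo h_subst]
  refine ⟨(integrableOn_neg_log_one_sub_div_self.add integrableOn_neg_log_div_one_sub).congr_fun
    h_subst.symm measurableSet_Ioo, ?_⟩
  rw [integral_add integrableOn_neg_log_one_sub_div_self integrableOn_neg_log_div_one_sub,
    integral_neg_log_one_sub_div_self, integral_neg_log_div_one_sub]
  ring
end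

section
/- (Sommerfeld expansion.) Let μ ∈ ℝ, E₀ < μ, and let g : ℝ → ℝ be continuously differentiable with g(E) = 0 for all E ≤ E₀, and assume there are constants C > 0 and k ∈ ℕ with |g(E)| + |g′(E)| ≤ C(1+|E|)^k for all E. Then, as T → 0⁺, T^{−2} · [ ∫_{−∞}^{∞} g(E) · f_T(E−μ) dE − ∫_{−∞}^{μ} g(E) dE ] converges to (π²/6) · g′(μ). -/
/-!
Write `H = f₁ - 𝟙_{(-∞, 0]}` for the Fermi function at `T = 1` minus its zero-temperature
limit. The substitution `E = μ + T x` turns the bracket into `T ∫ g(μ + T x) H(x) dx`, and since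
`H` is odd, `∫ H = 0`, so the quotient equals `∫ (g(μ + T x) - g(μ)) / T · H(x) dx`. As `|H(x)| ≤
e^{-|x|}` and the mean value theorem bounds the difference quotient by a polynomial in `|x|`,
dominated convergence gives the limit `g'(μ) ∫ x H(x) dx`. Finally `x H(x) = |x| / (1 + e^{|x|})`,
and expanding `1 / (1 + eˣ)` as a geometric series gives
`∫₀^∞ x / (1 + eˣ) dx = ∑ (-1)ⁿ / (n + 1)² = π² / 12`.
-/

open Filter MeasureTheory Set Real Topology

noncomputable def fermiStepDiff (x : ℝ) : ℝ := (1 + exp x)⁻¹ - (Iic 0).indicator 1 x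

lemma fermiStepDiff_of_pos {x : ℝ} (hx : 0 < x) : fermiStepDiff x = (1 + exp x)⁻¹ := by
  simp [fermiStepDiff, hx.not_ge]

lemma fermiStepDiff_of_nonpos {x : ℝ} (hx : x ≤ 0) : fermiStepDiff x = -(1 + exp (-x))⁻¹ := by
  rw [fermiStepDiff, indicator_of_mem (mem_Iic.mpr hx), Pi.one_apply, exp_neg]
  field_simp
  ring

lemma fermiStepDiff_neg {x : ℝ} (hx : x ≠ 0) : fermiStepDiff (-x) = -fermiStepDiff x := by
  rcases hx.lt_or_gt with hx | hx
  · rw [fermiStepDiff_of_pos (neg_pos.mpr hx), fermiStepDiff_of_nonpos hx.le, neg_neg]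
  · rw [fermiStepDiff_of_nonpos (neg_nonpos.mpr hx.le), fermiStepDiff_of_pos hx, neg_neg]

lemma mul_fermiStepDiff (x : ℝ) : x * fermiStepDiff x = |x| * (1 + exp |x|)⁻¹ := by
  rcases le_or_gt x 0 with hx | hx
  · rw [fermiStepDiff_of_nonpos hx, abs_of_nonpos hx]
    ring
  · rw [fermiStepDiff_of_pos hx, abs_of_pos hx]

lemma inv_one_add_exp_le (x : ℝ) : (1 + exp x)⁻¹ ≤ exp (-x) := by
  rw [exp_neg]
  exact inv_anti₀ (exp_pos x) (le_add_of_nonneg_left zero_le_one)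

lemma abs_fermiStepDiff_le (x : ℝ) : |fermiStepDiff x| ≤ exp (-|x|) := by
  rcases le_or_gt x 0 with hx | hx
  · rw [fermiStepDiff_of_nonpos hx, abs_neg, abs_of_pos (by positivity), abs_of_nonpos hx]
    exact inv_one_add_exp_le _
  · rw [fermiStepDiff_of_pos hx, abs_of_pos (by positivity), abs_of_pos hx]
    exact inv_one_add_exp_le _

lemma measurable_fermiStepDiff : Measurable fermiStepDiff := by
  unfold fermiStepDiff
  exact (by fun_prop : Measurable fun x => (1 + exp x)⁻¹).sub
    (measurable_const.indicator measurableSet_Iic)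

lemma integrable_one_add_abs_pow_mul_exp_neg_abs (n : ℕ) :
    Integrable fun x : ℝ => (1 + |x|) ^ n * exp (-|x|) := by
  refine ((integrable_one_add_norm (E := ℝ) (r := 2) (by norm_num)).const_mul
    ((n + 2).factorial * exp 1)).mono' (by fun_prop) (ae_of_all _ fun x => ?_)
  have hx : 0 < 1 + |x| := by positivity
  have hpow : (1 + |x|) ^ (n + 2) ≤ (n + 2).factorial * exp (1 + |x|) := by
    have := pow_div_factorial_le_exp (x := 1 + |x|) hx.le (n + 2)
    rwa [div_le_iff₀ (by positivity), mul_comm] at this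
  rw [exp_add] at hpow
  rw [norm_of_nonneg (by positivity), norm_eq_abs, rpow_neg hx.le, rpow_two]
  calc (1 + |x|) ^ n * exp (-|x|) = (1 + |x|) ^ (n + 2) * exp (-|x|) * ((1 + |x|) ^ 2)⁻¹ := by
        field_simp; ring
    _ ≤ (n + 2).factorial * (exp 1 * exp |x|) * exp (-|x|) * ((1 + |x|) ^ 2)⁻¹ := by gcongr
    _ = (n + 2).factorial * exp 1 * ((1 + |x|) ^ 2)⁻¹ := by
        rw [mul_assoc _ _ (exp (-|x|)), mul_assoc _ (exp |x|), ← exp_add]; simp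

lemma integrable_fermiStepDiff : Integrable fermiStepDiff := by
  refine (integrable_one_add_abs_pow_mul_exp_neg_abs 0).mono'
    measurable_fermiStepDiff.aestronglyMeasurable (ae_of_all _ fun x => ?_)
  simpa using abs_fermiStepDiff_le x

lemma integral_fermiStepDiff : ∫ x, fermiStepDiff x = 0 := by
  have hodd : ∫ x, fermiStepDiff (-x) = -∫ x, fermiStepDiff x := by
    rw [← integral_neg]
    refine integral_congr_ae ?_
    filter_upwards [Measure.ae_ne volume 0] with x hx using fermiStepDiff_neg hx
  rw [integral_neg_eq_self] at hodd
  linarith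

-- The Fourier series of the Bernoulli polynomial `B₂`, evaluated at `1 / 2`.
lemma hasSum_neg_one_pow_div_succ_sq :
    HasSum (fun n : ℕ => (-1) ^ n / ((n : ℝ) + 1) ^ 2) (π ^ 2 / 12) := by
  have h := hasSum_one_div_nat_pow_mul_cos one_ne_zero (x := 1 / 2) ⟨by norm_num, by norm_num⟩
  have h' : HasSum (fun n : ℕ => (-1) ^ n / (n : ℝ) ^ 2) (-(π ^ 2 / 12)) := by
    convert h using 1
    · ext n
      rw [show 2 * π * n * (1 / 2) = n * π by ring, cos_nat_mul_pi]
      ring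
    · rw [← bernoulliFun, mul_one, bernoulliFun_two]
      norm_num [Nat.factorial]
      ring
  rw [← hasSum_nat_add_iff' 1] at h'
  have h'' : HasSum (fun n : ℕ => -((-1) ^ (n + 1) / ((n + 1 : ℕ) : ℝ) ^ 2)) (π ^ 2 / 12) := by
    simpa using h'.neg
  refine h''.congr_fun fun n => ?_
  push_cast
  ring

lemma integral_Ioi_mul_exp_neg_mul {c : ℝ} (hc : 0 < c) :
    ∫ x in Ioi (0 : ℝ), x * exp (-(c * x)) = (c ^ 2)⁻¹ := by
  have h := integral_rpow_mul_exp_neg_mul_Ioi two_pos hc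
  norm_num [Gamma_two] at h
  exact h

lemma integrableOn_Ioi_mul_exp_neg_mul {c : ℝ} (hc : 0 < c) :
    IntegrableOn (fun x : ℝ => x * exp (-(c * x))) (Ioi 0) :=
  Integrable.of_integral_ne_zero (by rw [integral_Ioi_mul_exp_neg_mul hc]; positivity)

lemma integral_Ioi_mul_inv_one_add_exp :
    ∫ x in Ioi (0 : ℝ), x * (1 + exp x)⁻¹ = π ^ 2 / 12 := by
  set F : ℕ → ℝ → ℝ := fun n x => (-1) ^ n * (x * exp (-((n + 1) * x))) with hF
  have hc (n : ℕ) : (0 : ℝ) < n + 1 := by positivity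
  have hF_int (n : ℕ) : IntegrableOn (F n) (Ioi 0) :=
    (integrableOn_Ioi_mul_exp_neg_mul (hc n)).const_mul _
  have hF_integral (n : ℕ) : ∫ x in Ioi (0 : ℝ), F n x = (-1) ^ n / ((n : ℝ) + 1) ^ 2 := by
    rw [integral_const_mul, integral_Ioi_mul_exp_neg_mul (hc n), div_eq_mul_inv]
  have hF_norm (n : ℕ) : ∫ x in Ioi (0 : ℝ), ‖F n x‖ = |(-1) ^ n / ((n : ℝ) + 1) ^ 2| := by
    rw [abs_div, abs_pow, abs_neg, abs_one, one_pow, abs_of_pos (by positivity), one_div,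
      ← integral_Ioi_mul_exp_neg_mul (hc n)]
    refine setIntegral_congr_fun measurableSet_Ioi fun x (hx : 0 < x) => ?_
    simp [hF, norm_mul, abs_of_pos hx]
  have hF_sum : ∀ x ∈ Ioi (0 : ℝ), ∑' n, F n x = x * (1 + exp x)⁻¹ := by
    intro x (hx : 0 < x)
    have hr : |-exp (-x)| < 1 := by
      rw [abs_neg, abs_of_pos (exp_pos _), exp_lt_one_iff]
      exact neg_neg_of_pos hx
    have hterm (n : ℕ) : F n x = x * exp (-x) * (-exp (-x)) ^ n := by
      have hexp : exp (-((n + 1) * x)) = exp (-x) * exp (-x) ^ n := by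
        rw [← exp_nat_mul, ← exp_add]
        ring_nf
      change (-1) ^ n * (x * exp (-((n + 1) * x))) = _
      rw [hexp, neg_pow]
      ring
    rw [tsum_congr hterm, ((hasSum_geometric_of_abs_lt_one hr).mul_left _).tsum_eq, exp_neg,
      sub_neg_eq_add, mul_assoc, ← mul_inv, mul_add, mul_one, mul_inv_cancel₀ (exp_pos x).ne',
      add_comm]
  rw [← setIntegral_congr_fun measurableSet_Ioi hF_sum,
    ← integral_tsum_of_summable_integral_norm hF_int, tsum_congr hF_integral]
  · exact hasSum_neg_one_pow_div_succ_sq.tsum_eq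
  · simpa only [hF_norm] using (summable_abs_iff.mpr hasSum_neg_one_pow_div_succ_sq.summable)

lemma integral_mul_fermiStepDiff : ∫ x, x * fermiStepDiff x = π ^ 2 / 6 := by
  simp_rw [mul_fermiStepDiff]
  rw [integral_comp_abs (f := fun t => t * (1 + exp t)⁻¹), integral_Ioi_mul_inv_one_add_exp]
  ring

lemma Continuous.integrableOn_Iic_of_forall_le_eq_zero {g : ℝ → ℝ} (hg : Continuous g) {a : ℝ}
    (h0 : ∀ x ≤ a, g x = 0) (b : ℝ) : IntegrableOn g (Iic b) := by
  have hIic : IntegrableOn g (Iic a) :=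
    integrableOn_zero.congr_fun (fun x hx => (h0 x hx).symm) measurableSet_Iic
  refine (hIic.union (hg.integrableOn_Icc (a := a) (b := b))).mono_set fun x (hx : x ≤ b) => ?_
  rcases le_total x a with hxa | hxa
  · exact Or.inl hxa
  · exact Or.inr ⟨hxa, hx⟩

lemma integral_mul_fermi_sub_integral_Iic {g : ℝ → ℝ} {μ T : ℝ} (hT : 0 < T)
    (hg : IntegrableOn g (Iic μ)) (hgT : Integrable fun x => g (μ + T * x) * fermiStepDiff x) :
    (∫ E, g E * (1 + exp ((E - μ) / T))⁻¹) - ∫ E in Iic μ, g E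
      = T * ∫ x, g (μ + T * x) * fermiStepDiff x := by
  set φ : ℝ → ℝ := fun x => g (μ + T * x) * fermiStepDiff x
  have hφ (E : ℝ) : φ ((E - μ) / T) = g E * fermiStepDiff ((E - μ) / T) := by
    simp only [φ, mul_div_cancel₀ _ hT.ne', add_sub_cancel]
  have hsplit (E : ℝ) :
      g E * (1 + exp ((E - μ) / T))⁻¹ = (Iic μ).indicator g E + φ ((E - μ) / T) := by
    rw [hφ, fermiStepDiff]
    by_cases hE : E ≤ μ
    · have : (E - μ) / T ≤ 0 := div_nonpos_of_nonpos_of_nonneg (by linarith) hT.le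
      simp only [mem_Iic, hE, indicator_of_mem, this, Pi.one_apply]
      ring
    · have : ¬ (E - μ) / T ≤ 0 := not_le.mpr (div_pos (by linarith) hT)
      simp [hE, this]
  have hφ_int : Integrable fun E => φ ((E - μ) / T) :=
    (hgT.comp_div hT.ne').comp_sub_right μ
  calc (∫ E, g E * (1 + exp ((E - μ) / T))⁻¹) - ∫ E in Iic μ, g E
      = ∫ E, φ ((E - μ) / T) := by
        simp_rw [hsplit]
        rw [integral_add (hg.integrable_indicator measurableSet_Iic) hφ_int,
          integral_indicator measurableSet_Iic, add_sub_cancel_left]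
    _ = T * ∫ x, φ x := by
        rw [integral_sub_right_eq_self (fun E => φ (E / T)) μ, Measure.integral_comp_div,
          abs_of_pos hT, smul_eq_mul]

lemma integral_mul_fermi_sub_integral_Iic_div_sq {g : ℝ → ℝ} {μ T : ℝ} (hT : 0 < T)
    (hg : IntegrableOn g (Iic μ)) (hgT : Integrable fun x => g (μ + T * x) * fermiStepDiff x) :
    ((∫ E, g E * (1 + exp ((E - μ) / T))⁻¹) - ∫ E in Iic μ, g E) / T ^ 2
      = ∫ x, (g (μ + T * x) - g μ) / T * fermiStepDiff x := by
  have h : ∫ x, (g (μ + T * x) - g μ) / T * fermiStepDiff x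
      = ((∫ x, g (μ + T * x) * fermiStepDiff x) - g μ * ∫ x, fermiStepDiff x) / T := by
    simp_rw [div_mul_eq_mul_div, sub_mul]
    rw [integral_div, integral_sub hgT (integrable_fermiStepDiff.const_mul _), integral_const_mul]
  rw [h, integral_fermiStepDiff, integral_mul_fermi_sub_integral_Iic hT hg hgT]
  field_simp
  ring

section PolynomialGrowth

variable {f g K : ℝ → ℝ} {C : ℝ} {k : ℕ}

lemma nonneg_of_abs_le_mul_one_add_abs_pow (hf : ∀ x, |f x| ≤ C * (1 + |x|) ^ k) : 0 ≤ C := by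
  simpa using (abs_nonneg _).trans (hf 0)

lemma abs_comp_add_le_of_abs_le (hf : ∀ x, |f x| ≤ C * (1 + |x|) ^ k) (a y : ℝ) :
    |f (a + y)| ≤ C * (1 + |a|) ^ k * (1 + |y|) ^ k := by
  have hC := nonneg_of_abs_le_mul_one_add_abs_pow hf
  have h : 1 + |a + y| ≤ (1 + |a|) * (1 + |y|) := by
    nlinarith [abs_add_le a y, abs_nonneg a, abs_nonneg y]
  calc |f (a + y)| ≤ C * (1 + |a + y|) ^ k := hf _
    _ ≤ C * ((1 + |a|) * (1 + |y|)) ^ k := by gcongr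
    _ = C * (1 + |a|) ^ k * (1 + |y|) ^ k := by rw [mul_pow, mul_assoc]

lemma abs_sub_le_of_abs_deriv_le (hg : Differentiable ℝ g)
    (hg' : ∀ x, |deriv g x| ≤ C * (1 + |x|) ^ k) (a t : ℝ) :
    |g (a + t) - g a| ≤ C * (1 + |a|) ^ k * (1 + |t|) ^ k * |t| := by
  have hbound : ∀ y ∈ Metric.closedBall a |t|, ‖deriv g y‖ ≤ C * (1 + |a|) ^ k * (1 + |t|) ^ k := by
    intro y hy
    have hC := nonneg_of_abs_le_mul_one_add_abs_pow hg'
    rw [Metric.mem_closedBall, dist_eq_norm] at hy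
    calc ‖deriv g y‖ = |deriv g (a + (y - a))| := by rw [add_sub_cancel, norm_eq_abs]
      _ ≤ C * (1 + |a|) ^ k * (1 + |y - a|) ^ k := abs_comp_add_le_of_abs_le hg' a _
      _ ≤ C * (1 + |a|) ^ k * (1 + |t|) ^ k := by gcongr C * _ * (1 + ?_) ^ k; exact hy
  have := (convex_closedBall a |t|).norm_image_sub_le_of_norm_deriv_le (fun y _ => hg y) hbound
    (Metric.mem_closedBall_self (abs_nonneg t)) (y := a + t) (by simp [dist_eq_norm])
  simpa [norm_eq_abs] using this

lemma abs_slope_le_of_abs_deriv_le (hg : Differentiable ℝ g)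
    (hg' : ∀ x, |deriv g x| ≤ C * (1 + |x|) ^ k) (a x : ℝ) {T : ℝ} (hT0 : 0 < T) (hT1 : T ≤ 1) :
    |(g (a + T * x) - g a) / T| ≤ C * (1 + |a|) ^ k * (1 + |x|) ^ (k + 1) := by
  have hC := nonneg_of_abs_le_mul_one_add_abs_pow hg'
  have hTx : |T * x| = T * |x| := by rw [abs_mul, abs_of_pos hT0]
  have hTx_le : T * |x| ≤ |x| := mul_le_of_le_one_left (abs_nonneg x) hT1
  rw [abs_div, abs_of_pos hT0, div_le_iff₀ hT0]
  calc |g (a + T * x) - g a| ≤ C * (1 + |a|) ^ k * (1 + |T * x|) ^ k * |T * x| :=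
        abs_sub_le_of_abs_deriv_le hg hg' a _
    _ ≤ C * (1 + |a|) ^ k * (1 + |x|) ^ k * (T * (1 + |x|)) := by
        rw [hTx]
        gcongr
        linarith [abs_nonneg x]
    _ = C * (1 + |a|) ^ k * (1 + |x|) ^ (k + 1) * T := by ring

lemma integrable_comp_add_mul_mul (hg : Measurable g)
    (hg_le : ∀ x, |g x| ≤ C * (1 + |x|) ^ k) (hK : Measurable K)
    (hK_le : ∀ x, |K x| ≤ exp (-|x|)) (a : ℝ) {T : ℝ} (hT : |T| ≤ 1) :
    Integrable fun x => g (a + T * x) * K x := by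
  refine ((integrable_one_add_abs_pow_mul_exp_neg_abs k).const_mul (C * (1 + |a|) ^ k)).mono'
    (by fun_prop) (ae_of_all _ fun x => ?_)
  have hC := nonneg_of_abs_le_mul_one_add_abs_pow hg_le
  have hTx : |T * x| ≤ |x| := by
    rw [abs_mul]
    exact mul_le_of_le_one_left (abs_nonneg x) hT
  rw [norm_mul, norm_eq_abs, norm_eq_abs, ← mul_assoc]
  gcongr
  calc |g (a + T * x)| ≤ C * (1 + |a|) ^ k * (1 + |T * x|) ^ k :=
        abs_comp_add_le_of_abs_le hg_le _ _
    _ ≤ C * (1 + |a|) ^ k * (1 + |x|) ^ k := by gcongr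
  exact hK_le x

lemma tendsto_integral_slope_mul (hg : Differentiable ℝ g)
    (hg' : ∀ x, |deriv g x| ≤ C * (1 + |x|) ^ k) (hK : Measurable K)
    (hK_le : ∀ x, |K x| ≤ exp (-|x|)) (a : ℝ) :
    Tendsto (fun T => ∫ x, (g (a + T * x) - g a) / T * K x) (𝓝[>] 0)
      (𝓝 (deriv g a * ∫ x, x * K x)) := by
  rw [← integral_const_mul]
  have hgm : Measurable g := hg.continuous.measurable
  refine tendsto_integral_filter_of_dominated_convergence
    (fun x => C * (1 + |a|) ^ k * ((1 + |x|) ^ (k + 1) * exp (-|x|)))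
    (Eventually.of_forall fun T => by fun_prop) ?_
    ((integrable_one_add_abs_pow_mul_exp_neg_abs (k + 1)).const_mul _) (ae_of_all _ fun x => ?_)
  · filter_upwards [Ioc_mem_nhdsGT zero_lt_one] with T ⟨hT0, hT1⟩
    refine ae_of_all _ fun x => ?_
    have hslope := abs_slope_le_of_abs_deriv_le hg hg' a x hT0 hT1
    rw [norm_mul, norm_eq_abs, norm_eq_abs, ← mul_assoc]
    exact mul_le_mul hslope (hK_le x) (abs_nonneg _) ((abs_nonneg _).trans hslope)
  · have hφ : HasDerivAt (fun t => g (a + t * x)) (deriv g a * x) 0 := by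
      have hline : HasDerivAt (fun t => a + t * x) x 0 := by
        simpa using ((hasDerivAt_id (0 : ℝ)).mul_const x).const_add a
      exact (hg a).hasDerivAt.comp_of_eq 0 hline (by simp)
    convert hφ.tendsto_slope_zero_right.mul_const (K x) using 2 with T
    · simp [mul_comm T, div_eq_inv_mul]
    · ring

end PolynomialGrowth

theorem sommerfeld_expansion_general (μ E₀ : ℝ) (g : ℝ → ℝ)
    (hg : ContDiff ℝ 1 g) (hg0 : ∀ E ≤ E₀, g E = 0)
    (C : ℝ) (k : ℕ)
    (hbd : ∀ E : ℝ, |g E| + |deriv g E| ≤ C * (1 + |E|) ^ k) :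
    Tendsto (fun T : ℝ =>
        ((∫ E : ℝ, g E * (1 + Real.exp ((E - μ) / T))⁻¹) - ∫ E in Set.Iic μ, g E) / T ^ 2)
      (nhdsWithin 0 (Set.Ioi 0))
      (nhds (Real.pi ^ 2 / 6 * deriv g μ)) := by
  have hg_le (E : ℝ) : |g E| ≤ C * (1 + |E|) ^ k :=
    (le_add_of_nonneg_right (abs_nonneg _)).trans (hbd E)
  have hg'_le (E : ℝ) : |deriv g E| ≤ C * (1 + |E|) ^ k :=
    (le_add_of_nonneg_left (abs_nonneg _)).trans (hbd E)
  have hIic : IntegrableOn g (Iic μ) := hg.continuous.integrableOn_Iic_of_forall_le_eq_zero hg0 μ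
  have hlim := tendsto_integral_slope_mul (hg.differentiable one_ne_zero) hg'_le
    measurable_fermiStepDiff abs_fermiStepDiff_le μ
  rw [integral_mul_fermiStepDiff, mul_comm] at hlim
  refine hlim.congr' ?_
  filter_upwards [Ioc_mem_nhdsGT zero_lt_one] with T ⟨hT0, hT1⟩
  refine (integral_mul_fermi_sub_integral_Iic_div_sq hT0 hIic ?_).symm
  exact integrable_comp_add_mul_mul hg.continuous.measurable hg_le measurable_fermiStepDiff
    abs_fermiStepDiff_le μ (by rwa [abs_of_pos hT0])

/-- Sommerfeld expansion: for `μ ∈ ℝ`, `E₀ < μ` and a `C¹` function `g` vanishing on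
`(-∞, E₀]` and of polynomial growth (together with its derivative), one has
`T⁻² · (∫ g(E) f_T(E-μ) dE − ∫_{-∞}^μ g(E) dE) → (π²/6) g′(μ)` as `T → 0⁺`,
where `f_T(E) = (1+exp(E/T))⁻¹` is the Fermi function. -/
theorem sommerfeld_expansion (μ E₀ : ℝ) (hE₀ : E₀ < μ) (g : ℝ → ℝ)
    (hg : ContDiff ℝ 1 g) (hg0 : ∀ E ≤ E₀, g E = 0)
    (C : ℝ) (k : ℕ) (hC : 0 < C)
    (hbd : ∀ E : ℝ, |g E| + |deriv g E| ≤ C * (1 + |E|) ^ k) :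
    Tendsto (fun T : ℝ =>
        ((∫ E : ℝ, g E * (1 + Real.exp ((E - μ) / T))⁻¹) - ∫ E in Set.Iic μ, g E) / T ^ 2)
      (nhdsWithin 0 (Set.Ioi 0))
      (nhds (Real.pi ^ 2 / 6 * deriv g μ)) :=
  sommerfeld_expansion_general μ E₀ g hg hg0 C k hbd
end

section
/- Let α > 0, let μ > 0, and let w : ℝ → ℝ be continuous with w(E) = 0 for E ≤ 0 and |w(E)| ≤ C(1+|E|)^k for some constants C > 0, k ∈ ℕ. Define s_α(T) := ∫_{−∞}^{∞} w(E) · h_α(f_T(E−μ)) dE for T > 0. Then s_α(T)/T converges to (π²/3) · ((1+α)/(2α)) · w(μ) as T → 0⁺. -/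
/-!
Substituting `E = μ + T x` turns `s_α(T) / T` into `∫ w(μ + T x) G(x) dx` with the
Fermi profile `G(x) = h_α((1 + eˣ)⁻¹)`. Since `G` is even and decays exponentially while `w`
has polynomial growth, dominated convergence gives the limit `w(μ) ∫ G`. In terms of `|x|`, `G`
is a combination of `log (1 + e^{-t})` and `t / (1 + eᵗ)`; expanding both in alternating
exponential series and integrating termwise over `(0, ∞)` gives `η(2) = π² / 12` for each,
whence `∫ G = π² / 3 · (1 + α) / (2α)`.
-/

open Filter MeasureTheory

/-- The Rényi entropy function `h_α : [0,1] → ℝ`: for `α ≠ 1` it is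
`h_α(t) = (1-α)⁻¹ ln(t^α + (1-t)^α)`, and for `α = 1` it is the binary entropy
`h_1(t) = -t ln t - (1-t) ln(1-t)` (which vanishes at `t = 0, 1` since `ln 0 = 0`
in Mathlib's convention). -/
noncomputable def renyiH (α t : ℝ) : ℝ :=
  if α = 1 then -(t * Real.log t) - (1 - t) * Real.log (1 - t)
  else (1 - α)⁻¹ * Real.log (t ^ α + (1 - t) ^ α)

open Real Set
open scoped Nat Topology

@[fun_prop]
theorem measurable_renyiH (α : ℝ) : Measurable (renyiH α) := by
  unfold renyiH
  split_ifs <;> fun_prop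

theorem one_sub_inv_one_add_exp (x : ℝ) : 1 - (1 + exp x)⁻¹ = exp x / (1 + exp x) := by
  field_simp
  ring

theorem exp_div_one_add_exp (x : ℝ) : exp x / (1 + exp x) = (1 + exp (-x))⁻¹ := by
  rw [exp_neg]
  field_simp
  ring

theorem log_one_add_exp_eq (y : ℝ) : log (1 + exp y) = max y 0 + log (1 + exp (-|y|)) := by
  rcases le_total y 0 with hy | hy
  · rw [abs_of_nonpos hy, neg_neg, max_eq_right hy, zero_add]
  · have h : 1 + exp y = exp y * (1 + exp (-y)) := by
      rw [mul_add, mul_one, ← exp_add, add_neg_cancel, exp_zero, add_comm]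
    rw [abs_of_nonneg hy, max_eq_left hy, h, log_mul (exp_ne_zero y) (by positivity), log_exp]

theorem renyiH_inv_one_add_exp_of_ne_one {α : ℝ} (hα : 0 ≤ α) (hα₁ : α ≠ 1) (x : ℝ) :
    renyiH α (1 + exp x)⁻¹ =
      (1 - α)⁻¹ * (log (1 + exp (-(α * |x|))) - α * log (1 + exp (-|x|))) := by
  have hpos : 0 < 1 + exp x := by positivity
  have hsum : ((1 + exp x)⁻¹) ^ α + (exp x / (1 + exp x)) ^ α
      = (1 + exp (α * x)) / (1 + exp x) ^ α := by
    rw [inv_rpow hpos.le, div_rpow (exp_pos x).le hpos.le, ← exp_mul, mul_comm x α]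
    field_simp
  have hmax : max (α * x) 0 = α * max x 0 := by rw [mul_max_of_nonneg _ _ hα, mul_zero]
  rw [renyiH, if_neg hα₁, one_sub_inv_one_add_exp, hsum, log_div (by positivity)
    (rpow_pos_of_pos hpos α).ne', log_rpow hpos, log_one_add_exp_eq, log_one_add_exp_eq x,
    hmax, abs_mul, abs_of_nonneg hα]
  ring

theorem renyiH_one_inv_one_add_exp (x : ℝ) :
    renyiH 1 (1 + exp x)⁻¹ = log (1 + exp (-|x|)) + |x| / (1 + exp |x|) := by
  have hpos : 0 < 1 + exp x := by positivity
  have h : renyiH 1 (1 + exp x)⁻¹ = log (1 + exp x) - x * (exp x / (1 + exp x)) := by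
    rw [renyiH, if_pos rfl, one_sub_inv_one_add_exp, log_inv,
      log_div (exp_ne_zero x) hpos.ne', log_exp]
    field_simp
    ring
  rw [h]
  rcases le_total x 0 with hx | hx
  · rw [abs_of_nonpos hx, neg_neg, exp_div_one_add_exp]
    ring
  · rw [abs_of_nonneg hx, log_one_add_exp_eq, abs_of_nonneg hx, max_eq_left hx]
    field_simp
    ring

-- Fourier series of the Bernoulli polynomial `B₂` at `x = 1/2`.
theorem hasSum_alternating_inv_sq :
    HasSum (fun n : ℕ => (-1 : ℝ) ^ n / ((n : ℝ) + 1) ^ 2) (π ^ 2 / 12) := by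
  have h := hasSum_one_div_nat_pow_mul_cos one_ne_zero (x := 2⁻¹) ⟨by norm_num, by norm_num⟩
  rw [← bernoulliFun, Nat.mul_one, bernoulliFun_two] at h
  have h' := ((hasSum_nat_add_iff' 1).mpr h).neg
  norm_num at h'
  rw [show (2 * π) ^ 2 / 2 / 2 * (1 / 12) = π ^ 2 / 12 by ring] at h'
  refine h'.congr_fun fun n => ?_
  rw [show 2 * π * ((n : ℝ) + 1) * (1 / 2) = ((n + 1 : ℕ) : ℝ) * π by push_cast; ring,
    cos_nat_mul_pi]
  ring

theorem hasSum_integral_Ioi_of_hasSum_alternating {f : ℝ → ℝ} {g : ℕ → ℝ → ℝ}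
    (hg_int : ∀ n, IntegrableOn (g n) (Ioi 0))
    (hg_nonneg : ∀ n, ∀ t ∈ Ioi (0 : ℝ), 0 ≤ g n t)
    (hg_sum : Summable fun n => ∫ t in Ioi 0, g n t)
    (hf : ∀ t ∈ Ioi (0 : ℝ), HasSum (fun n => (-1) ^ n * g n t) (f t)) :
    HasSum (fun n => (-1) ^ n * ∫ t in Ioi 0, g n t) (∫ t in Ioi 0, f t) := by
  have hnorm (n : ℕ) : ∫ t in Ioi 0, ‖(-1) ^ n * g n t‖ = ∫ t in Ioi 0, g n t :=
    setIntegral_congr_fun measurableSet_Ioi fun t ht => by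
      rw [norm_mul, norm_pow, norm_neg, norm_one, one_pow, one_mul,
        Real.norm_of_nonneg (hg_nonneg n t ht)]
  have h := hasSum_integral_of_summable_integral_norm (fun n => (hg_int n).const_mul ((-1) ^ n))
    (by simpa only [hnorm] using hg_sum)
  simp only [integral_const_mul] at h
  rwa [setIntegral_congr_fun measurableSet_Ioi fun t ht => (hf t ht).tsum_eq] at h

theorem integral_exp_neg_mul_Ioi {r : ℝ} (hr : 0 < r) :
    ∫ t in Ioi 0, exp (-(r * t)) = r⁻¹ := by
  simpa using integral_rpow_mul_exp_neg_mul_Ioi one_pos hr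

theorem integral_mul_exp_neg_mul_Ioi {r : ℝ} (hr : 0 < r) :
    ∫ t in Ioi 0, t * exp (-(r * t)) = (r ^ 2)⁻¹ := by
  have h := integral_rpow_mul_exp_neg_mul_Ioi two_pos hr
  norm_num at h
  exact h

theorem integrableOn_exp_neg_mul_Ioi {r : ℝ} (hr : 0 < r) :
    IntegrableOn (fun t => exp (-(r * t))) (Ioi 0) :=
  .of_integral_ne_zero (by rw [integral_exp_neg_mul_Ioi hr]; positivity)

theorem integrableOn_mul_exp_neg_mul_Ioi {r : ℝ} (hr : 0 < r) :
    IntegrableOn (fun t => t * exp (-(r * t))) (Ioi 0) :=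
  .of_integral_ne_zero (by rw [integral_mul_exp_neg_mul_Ioi hr]; positivity)

theorem abs_neg_exp_neg_lt_one {t : ℝ} (ht : 0 < t) : |-exp (-t)| < 1 := by
  rw [abs_neg, abs_of_pos (exp_pos _), Real.exp_lt_one_iff]
  linarith

theorem hasSum_log_one_add_exp_neg {t : ℝ} (ht : 0 < t) :
    HasSum (fun n : ℕ => (-1) ^ n * (exp (-((n + 1) * t)) / (n + 1))) (log (1 + exp (-t))) := by
  have h := (hasSum_pow_div_log_of_abs_lt_one (abs_neg_exp_neg_lt_one ht)).neg
  rw [sub_neg_eq_add, neg_neg] at h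
  refine h.congr_fun fun n => ?_
  rw [neg_pow (exp (-t)), ← exp_nat_mul]
  push_cast
  ring_nf

theorem hasSum_inv_one_add_exp {t : ℝ} (ht : 0 < t) :
    HasSum (fun n : ℕ => (-1) ^ n * exp (-((n + 1) * t))) (1 + exp t)⁻¹ := by
  have h := (hasSum_geometric_of_abs_lt_one (abs_neg_exp_neg_lt_one ht)).mul_left (exp (-t))
  rw [sub_neg_eq_add, show exp (-t) * (1 + exp (-t))⁻¹ = (1 + exp t)⁻¹ by
    rw [exp_neg]; field_simp; ring] at h
  refine h.congr_fun fun n => ?_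
  rw [neg_pow (exp (-t)), ← exp_nat_mul, mul_left_comm, ← exp_add]
  ring_nf

theorem summable_inv_add_one_sq : Summable fun n : ℕ => (((n : ℝ) + 1) ^ 2)⁻¹ := by
  exact_mod_cast (summable_nat_add_iff 1).mpr (Real.summable_nat_pow_inv.mpr one_lt_two)

theorem integral_log_one_add_exp_neg :
    ∫ t in Ioi 0, log (1 + exp (-t)) = π ^ 2 / 12 := by
  have hint (n : ℕ) :
      ∫ t in Ioi 0, exp (-((n + 1) * t)) / (n + 1) = (((n : ℝ) + 1) ^ 2)⁻¹ := by
    rw [integral_div, integral_exp_neg_mul_Ioi (by positivity), sq, mul_inv, div_eq_mul_inv]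
  have h := hasSum_integral_Ioi_of_hasSum_alternating
    (fun n => (integrableOn_exp_neg_mul_Ioi (by positivity)).div_const _)
    (fun n t _ => by positivity) (by simpa only [hint] using summable_inv_add_one_sq)
    (fun t ht => hasSum_log_one_add_exp_neg ht)
  simp only [hint, ← div_eq_mul_inv] at h
  exact h.unique hasSum_alternating_inv_sq

theorem integral_div_one_add_exp :
    ∫ t in Ioi 0, t / (1 + exp t) = π ^ 2 / 12 := by
  have hint (n : ℕ) : ∫ t in Ioi 0, t * exp (-((n + 1) * t)) = (((n : ℝ) + 1) ^ 2)⁻¹ :=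
    integral_mul_exp_neg_mul_Ioi (by positivity)
  have h := hasSum_integral_Ioi_of_hasSum_alternating
    (g := fun n t => t * exp (-((n + 1) * t)))
    (fun n => integrableOn_mul_exp_neg_mul_Ioi (by positivity))
    (fun n t ht => mul_nonneg (le_of_lt ht) (exp_pos _).le)
    (by simpa only [hint] using summable_inv_add_one_sq)
    (fun t ht => ((hasSum_inv_one_add_exp ht).mul_left t).congr_fun fun n => by ring)
  simp only [hint, ← div_eq_mul_inv] at h
  exact h.unique hasSum_alternating_inv_sq

theorem abs_log_one_add_exp_le (u : ℝ) : |log (1 + exp u)| ≤ exp u := by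
  have hpos : 0 < 1 + exp u := by positivity
  rw [abs_of_nonneg (log_nonneg (by linarith [exp_pos u]))]
  linarith [log_le_sub_one_of_pos hpos]

theorem integrableOn_log_one_add_exp_neg_mul {b : ℝ} (hb : 0 < b) :
    IntegrableOn (fun t => log (1 + exp (-(b * t)))) (Ioi 0) :=
  (integrableOn_exp_neg_mul_Ioi hb).mono' (Measurable.aestronglyMeasurable (by fun_prop))
    (Eventually.of_forall fun t => abs_log_one_add_exp_le _)

theorem div_one_add_exp_le {t : ℝ} (ht : 0 ≤ t) : t / (1 + exp t) ≤ t * exp (-t) := by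
  rw [exp_neg, ← div_eq_mul_inv]
  exact div_le_div_of_nonneg_left ht (exp_pos t) (by linarith)

theorem integrableOn_div_one_add_exp : IntegrableOn (fun t => t / (1 + exp t)) (Ioi 0) := by
  refine (integrableOn_mul_exp_neg_mul_Ioi one_pos).mono'
    (Measurable.aestronglyMeasurable (by fun_prop)) ?_
  filter_upwards [ae_restrict_mem measurableSet_Ioi] with t (ht : 0 < t)
  rw [Real.norm_of_nonneg (by positivity), one_mul]
  exact div_one_add_exp_le ht.le

theorem integral_log_one_add_exp_neg_mul {b : ℝ} (hb : 0 < b) :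
    ∫ t in Ioi 0, log (1 + exp (-(b * t))) = b⁻¹ * (π ^ 2 / 12) := by
  rw [integral_comp_mul_left_Ioi (fun u => log (1 + exp (-u))) 0 hb, mul_zero,
    integral_log_one_add_exp_neg, smul_eq_mul]

theorem integral_renyiH_inv_one_add_exp {α : ℝ} (hα : 0 < α) :
    ∫ x, renyiH α (1 + exp x)⁻¹ = π ^ 2 / 3 * ((1 + α) / (2 * α)) := by
  have hL : IntegrableOn (fun t => log (1 + exp (-t))) (Ioi 0) := by
    simpa using integrableOn_log_one_add_exp_neg_mul one_pos
  rcases eq_or_ne α 1 with rfl | hα₁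
  · simp_rw [renyiH_one_inv_one_add_exp]
    rw [integral_comp_abs (f := fun t => log (1 + exp (-t)) + t / (1 + exp t)),
      integral_add hL integrableOn_div_one_add_exp, integral_log_one_add_exp_neg,
      integral_div_one_add_exp]
    ring
  · simp_rw [renyiH_inv_one_add_exp_of_ne_one hα.le hα₁]
    rw [integral_comp_abs (f := fun t => (1 - α)⁻¹ * (log (1 + exp (-(α * t)))
        - α * log (1 + exp (-t)))), integral_const_mul,
      integral_sub (integrableOn_log_one_add_exp_neg_mul hα) (hL.const_mul α),
      integral_const_mul, integral_log_one_add_exp_neg_mul hα, integral_log_one_add_exp_neg]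
    have : 1 - α ≠ 0 := sub_ne_zero.mpr hα₁.symm
    field_simp
    ring

theorem integrable_exp_neg_mul_abs {b : ℝ} (hb : 0 < b) :
    Integrable fun x : ℝ => exp (-(b * |x|)) := by
  rw [← integrableOn_univ, ← Iic_union_Ioi (a := 0)]
  refine IntegrableOn.union ((integrableOn_exp_mul_Iic hb 0).congr_fun (fun x hx => ?_)
    measurableSet_Iic) ((integrableOn_exp_mul_Ioi (neg_lt_zero.mpr hb) 0).congr_fun
    (fun x hx => ?_) measurableSet_Ioi)
  · rw [abs_of_nonpos (mem_Iic.mp hx), mul_neg, neg_neg]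
  · rw [abs_of_pos (mem_Ioi.mp hx), ← neg_mul]

theorem one_add_abs_pow_mul_exp_neg_le {m : ℝ} (hm : 0 < m) (n : ℕ) (x : ℝ) :
    (1 + |x|) ^ n * exp (-(m * |x|)) ≤
      (2 / m) ^ n * n ! * exp (m / 2) * exp (-(m / 2 * |x|)) := by
  have h := pow_div_factorial_le_exp (x := m / 2 * (1 + |x|)) (by positivity) n
  rw [div_le_iff₀ (by positivity), mul_pow] at h
  calc (1 + |x|) ^ n * exp (-(m * |x|))
      = (2 / m) ^ n * ((m / 2) ^ n * (1 + |x|) ^ n) * exp (-(m * |x|)) := by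
        rw [← mul_assoc, ← mul_pow, div_mul_div_comm, mul_comm 2 m, div_self (by positivity),
          one_pow, one_mul]
    _ ≤ (2 / m) ^ n * (exp (m / 2 * (1 + |x|)) * n !) * exp (-(m * |x|)) := by gcongr
    _ = (2 / m) ^ n * n ! * exp (m / 2) * exp (-(m / 2 * |x|)) := by
        have h_exp : exp (m / 2 * (1 + |x|)) * exp (-(m * |x|))
            = exp (m / 2) * exp (-(m / 2 * |x|)) := by
          rw [← exp_add, ← exp_add]
          ring_nf
        linear_combination (2 / m) ^ n * n ! * h_exp

theorem integrable_one_add_abs_pow_mul_exp_neg_mul_abs {m : ℝ} (hm : 0 < m) (n : ℕ) :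
    Integrable fun x : ℝ => (1 + |x|) ^ n * exp (-(m * |x|)) :=
  ((integrable_exp_neg_mul_abs (half_pos hm)).const_mul _).mono'
    (Measurable.aestronglyMeasurable (by fun_prop)) (Eventually.of_forall fun x => by
      rw [Real.norm_of_nonneg (by positivity)]
      exact one_add_abs_pow_mul_exp_neg_le hm n x)

theorem abs_renyiH_inv_one_add_exp_le {α : ℝ} (hα : 0 < α) :
    ∃ c m : ℝ, 0 < m ∧
      ∀ x, |renyiH α (1 + exp x)⁻¹| ≤ c * ((1 + |x|) * exp (-(m * |x|))) := by
  rcases eq_or_ne α 1 with rfl | hα₁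
  · refine ⟨1, 1, one_pos, fun x => ?_⟩
    have hL := abs_log_one_add_exp_le (-|x|)
    have hK := div_one_add_exp_le (abs_nonneg x)
    rw [renyiH_one_inv_one_add_exp, one_mul, one_mul, add_mul, one_mul]
    calc |log (1 + exp (-|x|)) + |x| / (1 + exp |x|)|
        ≤ |log (1 + exp (-|x|))| + |x| / (1 + exp |x|) := by
          refine (abs_add_le _ _).trans_eq ?_
          rw [abs_of_nonneg (a := |x| / (1 + exp |x|)) (by positivity)]
      _ ≤ exp (-|x|) + |x| * exp (-|x|) := add_le_add hL hK
  · refine ⟨|1 - α|⁻¹ * (1 + α), min α 1, lt_min hα one_pos, fun x => ?_⟩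
    have hLα := abs_log_one_add_exp_le (-(α * |x|))
    have hL := abs_log_one_add_exp_le (-|x|)
    have hα_exp : exp (-(α * |x|)) ≤ exp (-(min α 1 * |x|)) :=
      exp_le_exp.mpr (neg_le_neg (mul_le_mul_of_nonneg_right (min_le_left α 1) (abs_nonneg x)))
    have h1_exp : exp (-|x|) ≤ exp (-(min α 1 * |x|)) :=
      exp_le_exp.mpr (neg_le_neg (mul_le_of_le_one_left (abs_nonneg x) (min_le_right α 1)))
    rw [renyiH_inv_one_add_exp_of_ne_one hα.le hα₁, abs_mul, abs_inv, mul_assoc]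
    gcongr
    calc |log (1 + exp (-(α * |x|))) - α * log (1 + exp (-|x|))|
        ≤ |log (1 + exp (-(α * |x|)))| + α * |log (1 + exp (-|x|))| := by
          exact (abs_sub _ _).trans_eq (by rw [abs_mul, abs_of_pos hα])
      _ ≤ (1 + α) * exp (-(min α 1 * |x|)) := by nlinarith
      _ ≤ (1 + α) * ((1 + |x|) * exp (-(min α 1 * |x|))) := by
          gcongr
          exact le_mul_of_one_le_left (exp_pos _).le (by linarith [abs_nonneg x])

theorem integrable_one_add_abs_pow_mul_renyiH_inv_one_add_exp {α : ℝ} (hα : 0 < α) (k : ℕ) :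
    Integrable fun x => (1 + |x|) ^ k * renyiH α (1 + exp x)⁻¹ := by
  obtain ⟨c, m, hm, hG⟩ := abs_renyiH_inv_one_add_exp_le hα
  refine ((integrable_one_add_abs_pow_mul_exp_neg_mul_abs hm (k + 1)).const_mul c).mono'
    (Measurable.aestronglyMeasurable (by fun_prop)) (Eventually.of_forall fun x => ?_)
  calc ‖(1 + |x|) ^ k * renyiH α (1 + exp x)⁻¹‖
      = (1 + |x|) ^ k * |renyiH α (1 + exp x)⁻¹| := by
        rw [norm_mul, Real.norm_of_nonneg (by positivity), Real.norm_eq_abs]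
    _ ≤ (1 + |x|) ^ k * (c * ((1 + |x|) * exp (-(m * |x|)))) := by gcongr; exact hG x
    _ = c * ((1 + |x|) ^ (k + 1) * exp (-(m * |x|))) := by ring

theorem tendsto_integral_comp_add_mul_mul {w G : ℝ → ℝ} {C : ℝ} {k : ℕ}
    (hw : Continuous w) (hw_bound : ∀ E, |w E| ≤ C * (1 + |E|) ^ k)
    (hG : AEStronglyMeasurable G) (hG_int : Integrable fun x => (1 + |x|) ^ k * G x) (μ : ℝ) :
    Tendsto (fun T => ∫ x, w (μ + T * x) * G x) (𝓝 0) (𝓝 (w μ * ∫ x, G x)) := by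
  have hC : 0 ≤ C := by simpa using (abs_nonneg _).trans (hw_bound 0)
  have h_lim (x : ℝ) : Tendsto (fun T => w (μ + T * x) * G x) (𝓝 0) (𝓝 (w μ * G x)) :=
    ((by fun_prop : Continuous fun T => w (μ + T * x)).tendsto' 0 (w μ) (by simp)).mul_const _
  have h_bound : ∀ᶠ T in 𝓝 (0 : ℝ), ∀ x,
      ‖w (μ + T * x) * G x‖ ≤ C * (1 + |μ|) ^ k * ‖(1 + |x|) ^ k * G x‖ := by
    filter_upwards [Metric.closedBall_mem_nhds (0 : ℝ) one_pos] with T hT x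
    rw [Metric.mem_closedBall, dist_zero_right, Real.norm_eq_abs] at hT
    have hshift : 1 + |μ + T * x| ≤ (1 + |μ|) * (1 + |x|) := by
      calc 1 + |μ + T * x| ≤ 1 + |μ| + |T| * |x| := by
            linarith [abs_add_le μ (T * x), (abs_mul T x).le]
        _ ≤ (1 + |μ|) * (1 + |x|) := by nlinarith [abs_nonneg μ, abs_nonneg x]
    calc ‖w (μ + T * x) * G x‖ = |w (μ + T * x)| * |G x| := by
          rw [norm_mul, Real.norm_eq_abs, Real.norm_eq_abs]
      _ ≤ C * ((1 + |μ|) * (1 + |x|)) ^ k * |G x| := by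
          gcongr
          exact (hw_bound _).trans (by gcongr)
      _ = C * (1 + |μ|) ^ k * ‖(1 + |x|) ^ k * G x‖ := by
          rw [norm_mul, Real.norm_of_nonneg (by positivity), Real.norm_eq_abs, mul_pow]
          ring
  rw [← integral_const_mul]
  exact tendsto_integral_filter_of_dominated_convergence _
    (Eventually.of_forall fun T => (hw.comp (by fun_prop)).aestronglyMeasurable.mul hG)
    (h_bound.mono fun T hT => Eventually.of_forall hT) (hG_int.norm.const_mul _)
    (Eventually.of_forall h_lim)

theorem integral_div_eq_integral_comp_add_mul (f : ℝ → ℝ) (μ : ℝ) {T : ℝ} (hT : 0 < T) :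
    (∫ E, f E) / T = ∫ x, f (μ + T * x) := by
  rw [Measure.integral_comp_mul_left (fun y => f (μ + y)) T, integral_add_left_eq_self,
    abs_of_pos (inv_pos.mpr hT), smul_eq_mul, div_eq_inv_mul]

theorem renyi_entropy_density_low_temperature_general (α μ : ℝ) (hα : 0 < α)
    (w : ℝ → ℝ) (hw : Continuous w)
    (C : ℝ) (k : ℕ) (hbd : ∀ E : ℝ, |w E| ≤ C * (1 + |E|) ^ k) :
    Tendsto (fun T : ℝ =>
        (∫ E : ℝ, w E * renyiH α ((1 + Real.exp ((E - μ) / T))⁻¹)) / T)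
      (nhdsWithin 0 (Set.Ioi 0))
      (nhds (Real.pi ^ 2 / 3 * ((1 + α) / (2 * α)) * w μ)) := by
  have h := tendsto_integral_comp_add_mul_mul hw hbd
    (Measurable.aestronglyMeasurable (by fun_prop))
    (integrable_one_add_abs_pow_mul_renyiH_inv_one_add_exp hα k) μ
  rw [integral_renyiH_inv_one_add_exp hα, mul_comm] at h
  refine (h.mono_left nhdsWithin_le_nhds).congr' ?_
  filter_upwards [self_mem_nhdsWithin] with T (hT : 0 < T)
  rw [integral_div_eq_integral_comp_add_mul _ μ hT]
  simp_rw [add_sub_cancel_left, mul_div_cancel_left₀ _ hT.ne']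

/-- Low-temperature asymptotics of the thermal `α`-Rényi entropy density: for `α > 0`,
`μ > 0` and a continuous weight `w` (playing the role of `N′`) vanishing on `(-∞,0]`
and of polynomial growth, `s_α(T)/T → (π²/3)·((1+α)/(2α))·w(μ)` as `T → 0⁺`, where
`s_α(T) = ∫ w(E) h_α(f_T(E-μ)) dE` and `f_T(E) = (1+exp(E/T))⁻¹`. -/
theorem renyi_entropy_density_low_temperature (α μ : ℝ) (hα : 0 < α) (hμ : 0 < μ)
    (w : ℝ → ℝ) (hw : Continuous w) (hw0 : ∀ E ≤ (0 : ℝ), w E = 0)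
    (C : ℝ) (k : ℕ) (hC : 0 < C) (hbd : ∀ E : ℝ, |w E| ≤ C * (1 + |E|) ^ k) :
    Tendsto (fun T : ℝ =>
        (∫ E : ℝ, w E * renyiH α ((1 + Real.exp ((E - μ) / T))⁻¹)) / T)
      (nhdsWithin 0 (Set.Ioi 0))
      (nhds (Real.pi ^ 2 / 3 * ((1 + α) / (2 * α)) * w μ)) :=
  renyi_entropy_density_low_temperature_general α μ hα w hw C k hbd
end

section
/- (Jensen–Berezin trace inequality, matrix version.) Let n ≥ 1, let A be an n×n complex Hermitian matrix whose spectrum is contained in [0,1], let P be an n×n complex orthogonal projection matrix (P² = P = P*), and let h : [0,1] → ℝ be continuous and concave with h(0) = 0. Then Tr h(PAP) ≥ Tr( P · h(A) · P ), where h is applied via the functional calculus of Hermitian matrices. -/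
/-!
Let `b j` be orthonormal eigenvectors of `PAP`, with eigenvalues `λ j`, and `v k` those of `A`,
with eigenvalues `μ k`. With the weights `w k = |⟪v k, P b j⟫|²` one has
`⟪P b j, h(A) P b j⟫ = ∑ k, w k * h (μ k)` and `λ j = ⟪P b j, A P b j⟫ = ∑ k, w k * μ k`,
while `∑ k, w k = ‖P b j‖² ≤ 1`. Jensen's inequality for the concave `h`, with the missing mass
`1 - ∑ k, w k` placed at `0`, gives `⟪P b j, h(A) P b j⟫ ≤ h (λ j)`; summing over `j` yields the
trace inequality.
-/

open Finset in
theorem ConcaveOn.sum_mul_le_of_sum_le_one {ι E : Type*} [AddCommGroup E] [Module ℝ E]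
    {s : Set E} {f : E → ℝ} (hf : ConcaveOn ℝ s f) (h0s : (0 : E) ∈ s) (hf0 : 0 ≤ f 0)
    {t : Finset ι} {w : ι → ℝ} {p : ι → E} (hw₀ : ∀ i ∈ t, 0 ≤ w i)
    (hw₁ : ∑ i ∈ t, w i ≤ 1) (hp : ∀ i ∈ t, p i ∈ s) :
    ∑ i ∈ t, w i * f (p i) ≤ f (∑ i ∈ t, w i • p i) := by
  have key := hf.le_map_sum (t := t.insertNone) (w := fun i => i.elim (1 - ∑ i ∈ t, w i) w)
    (p := fun i => i.elim 0 p)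
    (by rintro (_ | i) hi <;> simp_all [sub_nonneg])
    (by simp [sum_insertNone])
    (by rintro (_ | i) hi <;> simp_all)
  simp only [sum_insertNone, Option.elim_none, Option.elim_some, smul_zero, zero_add,
    smul_eq_mul] at key
  linarith [mul_nonneg (sub_nonneg.2 hw₁) hf0]

namespace Matrix

variable {n m 𝕜 : Type*} [RCLike 𝕜] [Fintype n] [DecidableEq n]

theorem re_conjTranspose_mul_diagonal_mul_apply_self (X : Matrix n m 𝕜) (d : n → ℝ) (j : m) :
    RCLike.re ((Xᴴ * diagonal (RCLike.ofReal ∘ d : n → 𝕜) * X) j j) =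
      ∑ k, ‖X k j‖ ^ 2 * d k := by
  rw [mul_apply, map_sum]
  refine Finset.sum_congr rfl fun k _ => ?_
  rw [mul_diagonal, conjTranspose_apply, Function.comp_apply, mul_right_comm, RCLike.star_def,
    RCLike.conj_mul, ← RCLike.ofReal_pow, ← RCLike.ofReal_mul, RCLike.ofReal_re]

theorem re_conjTranspose_mul_self_apply_self_nonneg (X : Matrix n m 𝕜) (j : m) :
    0 ≤ RCLike.re ((Xᴴ * X) j j) := by
  have h := re_conjTranspose_mul_diagonal_mul_apply_self X 1 j
  have hone : diagonal (RCLike.ofReal ∘ (1 : n → ℝ)) = (1 : Matrix n n 𝕜) := by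
    simp [Function.comp_def]
  rw [hone, Matrix.mul_one] at h
  rw [h]
  simp only [Pi.one_apply, mul_one]
  positivity

theorem re_conjTranspose_mul_mul_apply_self_nonneg {Q : Matrix n n 𝕜}
    (hQ : IsStarProjection Q) (X : Matrix n m 𝕜) (j : m) :
    0 ≤ RCLike.re ((Xᴴ * Q * X) j j) := by
  have hQQ : Xᴴ * Q * X = (Q * X)ᴴ * (Q * X) := by
    have hQs : Qᴴ = Q := hQ.isSelfAdjoint
    rw [conjTranspose_mul, hQs, ← Matrix.mul_assoc, Matrix.mul_assoc Xᴴ Q Q,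
      hQ.isIdempotentElem.eq]
  rw [hQQ]
  exact re_conjTranspose_mul_self_apply_self_nonneg (Q * X) j

theorem re_conjTranspose_mul_mul_apply_self_le {P : Matrix n n 𝕜} (hP : IsStarProjection P)
    (X : Matrix n m 𝕜) (j : m) :
    RCLike.re ((Xᴴ * P * X) j j) ≤ RCLike.re ((Xᴴ * X) j j) := by
  have h := re_conjTranspose_mul_mul_apply_self_nonneg hP.one_sub X j
  rw [Matrix.mul_sub, Matrix.sub_mul, Matrix.mul_one, sub_apply, map_sub] at h
  linarith

namespace IsHermitian

variable {A : Matrix n n 𝕜} (hA : A.IsHermitian)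
include hA

theorem conjTranspose_eigenvectorUnitary_mul_mul :
    (hA.eigenvectorUnitary : Matrix n n 𝕜)ᴴ * A * (hA.eigenvectorUnitary : Matrix n n 𝕜) =
      diagonal (RCLike.ofReal ∘ hA.eigenvalues : n → 𝕜) := by
  simpa [Unitary.conjStarAlgAut_star_apply, star_eq_conjTranspose] using
    hA.conjStarAlgAut_star_eigenvectorUnitary

theorem trace_cfc (f : ℝ → ℝ) : (hA.cfc f).trace = ∑ i, (f (hA.eigenvalues i) : 𝕜) := by
  rw [IsHermitian.cfc, Unitary.conjStarAlgAut_apply, trace_mul_cycle, Unitary.coe_star_mul_self,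
    Matrix.one_mul, trace_diagonal]
  rfl

theorem conjTranspose_mul_cfc_mul (f : ℝ → ℝ) (X : Matrix n m 𝕜) :
    Xᴴ * hA.cfc f * X = ((hA.eigenvectorUnitary : Matrix n n 𝕜)ᴴ * X)ᴴ *
      diagonal (RCLike.ofReal ∘ f ∘ hA.eigenvalues : n → 𝕜) *
        ((hA.eigenvectorUnitary : Matrix n n 𝕜)ᴴ * X) := by
  rw [IsHermitian.cfc, Unitary.conjStarAlgAut_apply, conjTranspose_mul,
    conjTranspose_conjTranspose, star_eq_conjTranspose]
  simp only [Matrix.mul_assoc]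

theorem re_conjTranspose_mul_cfc_mul_apply_self (f : ℝ → ℝ) (X : Matrix n m 𝕜) (j : m) :
    RCLike.re ((Xᴴ * hA.cfc f * X) j j) =
      ∑ k, ‖((hA.eigenvectorUnitary : Matrix n n 𝕜)ᴴ * X) k j‖ ^ 2 * f (hA.eigenvalues k) := by
  rw [hA.conjTranspose_mul_cfc_mul]
  exact re_conjTranspose_mul_diagonal_mul_apply_self _ (f ∘ hA.eigenvalues) j

theorem re_conjTranspose_mul_cfc_mul_apply_self_le {s : Set ℝ} {f : ℝ → ℝ}
    (hf : ConcaveOn ℝ s f) (h0s : 0 ∈ s) (hf0 : 0 ≤ f 0) (hspec : ∀ i, hA.eigenvalues i ∈ s)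
    {X : Matrix n m 𝕜} {j : m} (hX : RCLike.re ((Xᴴ * X) j j) ≤ 1) :
    RCLike.re ((Xᴴ * hA.cfc f * X) j j) ≤ f (RCLike.re ((Xᴴ * A * X) j j)) := by
  have hweights := hA.re_conjTranspose_mul_cfc_mul_apply_self 1 X j
  rw [← hA.cfc_eq, cfc_one ℝ A, Matrix.mul_one] at hweights
  simp only [Pi.one_apply, mul_one] at hweights
  have hmean := hA.re_conjTranspose_mul_cfc_mul_apply_self id X j
  rw [← hA.cfc_eq, cfc_id ℝ A] at hmean
  rw [hmean, hA.re_conjTranspose_mul_cfc_mul_apply_self]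
  simpa using hf.sum_mul_le_of_sum_le_one h0s hf0 (t := Finset.univ)
    (fun k _ => sq_nonneg _) (hweights ▸ hX) (fun k _ => hspec k)

end IsHermitian

end Matrix

open Matrix in
theorem jensen_berezin_trace_inequality_general (n : ℕ)
    (A P : Matrix (Fin n) (Fin n) ℂ)
    (hA : A.IsHermitian) (hspec : ∀ i, hA.eigenvalues i ∈ Set.Icc (0 : ℝ) 1)
    (hPproj : P * P = P) (hPherm : P.IsHermitian)
    (hPAP : (P * A * P).IsHermitian)
    (h : ℝ → ℝ)
    (hconc : ConcaveOn ℝ (Set.Icc (0 : ℝ) 1) h) (h0 : h 0 = 0) :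
    ((P * hA.cfc h * P).trace).re ≤ ((hPAP.cfc h).trace).re := by
  set W : Matrix (Fin n) (Fin n) ℂ := ↑hPAP.eigenvectorUnitary
  have hconj (M : Matrix (Fin n) (Fin n) ℂ) : (P * W)ᴴ * M * (P * W) = Wᴴ * (P * M * P) * W := by
    rw [conjTranspose_mul, hPherm.eq]
    simp only [Matrix.mul_assoc]
  have hcols (j : Fin n) : (((P * W)ᴴ * (P * W)) j j).re ≤ 1 := calc
    _ = ((Wᴴ * P * W) j j).re := by rw [← Matrix.mul_one (P * W)ᴴ, hconj, Matrix.mul_one, hPproj]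
    _ ≤ ((Wᴴ * W) j j).re := re_conjTranspose_mul_mul_apply_self_le ⟨hPproj, hPherm⟩ W j
    _ = 1 := by simp [W, ← star_eq_conjTranspose]
  calc ((P * hA.cfc h * P).trace).re
      = ((Wᴴ * (P * hA.cfc h * P) * W).trace).re := by
        rw [trace_mul_cycle Wᴴ, show W * Wᴴ = 1 from Unitary.coe_mul_star_self _, Matrix.one_mul]
    _ = ∑ j, (((P * W)ᴴ * hA.cfc h * (P * W)) j j).re := by
        rw [← hconj, trace, Complex.re_sum]
        rfl
    _ ≤ ∑ j, h ((((P * W)ᴴ * A * (P * W)) j j).re) := Finset.sum_le_sum fun j _ =>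
        hA.re_conjTranspose_mul_cfc_mul_apply_self_le hconc (by simp) h0.ge hspec (hcols j)
    _ = ∑ j, h (hPAP.eigenvalues j) := by
        rw [hconj, hPAP.conjTranspose_eigenvectorUnitary_mul_mul]
        simp
    _ = ((hPAP.cfc h).trace).re := by simp [hPAP.trace_cfc]

/-- Jensen–Berezin trace inequality (matrix version): for an `n×n` Hermitian matrix `A`
with spectrum in `[0,1]`, an orthogonal projection `P` and a continuous concave
function `h : [0,1] → ℝ` with `h 0 = 0`, one has `Tr h(PAP) ≥ Tr (P h(A) P)`, where
`h` is applied via the functional calculus of Hermitian matrices. -/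
theorem jensen_berezin_trace_inequality (n : ℕ) (hn : 1 ≤ n)
    (A P : Matrix (Fin n) (Fin n) ℂ)
    (hA : A.IsHermitian) (hspec : ∀ i, hA.eigenvalues i ∈ Set.Icc (0 : ℝ) 1)
    (hPproj : P * P = P) (hPherm : P.IsHermitian)
    (hPAP : (P * A * P).IsHermitian)
    (h : ℝ → ℝ) (hcont : ContinuousOn h (Set.Icc (0 : ℝ) 1))
    (hconc : ConcaveOn ℝ (Set.Icc (0 : ℝ) 1) h) (h0 : h 0 = 0) :
    ((P * hA.cfc h * P).trace).re ≤ ((hPAP.cfc h).trace).re :=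
  jensen_berezin_trace_inequality_general n A P hA hspec hPproj hPherm hPAP h hconc h0
end
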